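/- The pointing representation determines the tree: if T₁ and T₂ are binary span trees over [1, n] (n ≥ 2) such that for every i ∈ [1, n−1] the largest span of T₁ with endpoint i equals the largest span of T₂ with endpoint i, then S(T₁) = S(T₂). -/
import Mathlib


/-- A full binary tree over the leaf interval `[i, j]`: a leaf covers `[i, i]`,
and an internal node covering `[i, j]` splits at point `k` (`i ≤ k < j`) into
children covering `[i, k]` and `[k+1, j]`. -/
inductive SpanTree : ℕ → ℕ → Type where
  | leaf (i : ℕ) : SpanTree i i
  | node {i k j : ℕ} (h1 : i ≤ k) (h2 : k < j)
      (l : SpanTree i k) (r : SpanTree (k + 1) j) : SpanTree i j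

/-- The set `S(T)` of (non-singleton) spans of internal nodes of the tree. -/
def SpanTree.spans : ∀ {i j : ℕ}, SpanTree i j → Set (ℕ × ℕ)
  | _, _, .leaf _ => ∅
  | i, j, .node _ _ l r => insert (i, j) (l.spans ∪ r.spans)

/-- The set of splits `(i, k, j)` of internal nodes: node covering `(i, j)`
split at point `k` into children covering `(i, k)` and `(k+1, j)`. -/
def SpanTree.splits : ∀ {a b : ℕ}, SpanTree a b → Set (ℕ × ℕ × ℕ)
  | _, _, .leaf _ => ∅
  | _, _, @SpanTree.node i k j _ _ l r => insert (i, k, j) (l.splits ∪ r.splits)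

/-- Interval inclusion: the span `s` is a (not necessarily proper) subinterval of `t`. -/
def SpanSub (s t : ℕ × ℕ) : Prop := t.1 ≤ s.1 ∧ s.2 ≤ t.2

/-- `i` is an endpoint of the span `s`. -/
def HasEndpoint (s : ℕ × ℕ) (i : ℕ) : Prop := s.1 = i ∨ s.2 = i

/-- `s` is the inclusion-largest span of `T` having `i` as an endpoint. -/
def IsLargestAt {a b : ℕ} (T : SpanTree a b) (i : ℕ) (s : ℕ × ℕ) : Prop :=
  s ∈ T.spans ∧ HasEndpoint s i ∧ ∀ t ∈ T.spans, HasEndpoint t i → SpanSub t s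

lemma spans_bounds {a b : ℕ} (T : SpanTree a b) {s : ℕ × ℕ}
    (hs : s ∈ T.spans) : a ≤ s.1 ∧ s.1 < s.2 ∧ s.2 ≤ b := by
  induction T with
  | leaf i => simp [SpanTree.spans] at hs
  | node h1 h2 l r ihl ihr =>
    simp only [SpanTree.spans, Set.mem_insert_iff, Set.mem_union] at hs
    rcases hs with h | h | h
    · subst h; exact ⟨le_refl _, lt_of_le_of_lt h1 h2, le_refl _⟩
    · have := ihl h; omega
    · have := ihr h; omega

lemma root_mem {a b : ℕ} (T : SpanTree a b) (h : a < b) : (a, b) ∈ T.spans := by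
  cases T with
  | leaf i => omega
  | node h1 h2 l r => exact Set.mem_insert _ _

lemma root_largest {a b : ℕ} (T : SpanTree a b) (h : a < b) {i : ℕ}
    (hi : i = a ∨ i = b) : IsLargestAt T i (a, b) := by
  refine ⟨root_mem T h, ?_, fun t ht _ => ?_⟩
  · rcases hi with h' | h' <;> [exact Or.inl h'.symm; exact Or.inr h'.symm]
  · have := spans_bounds T ht; exact ⟨this.1, this.2.2⟩

lemma lift_left {a k b : ℕ} (h1 : a ≤ k) (h2 : k < b)
    (l : SpanTree a k) (r : SpanTree (k + 1) b)
    {i : ℕ} (hai : a < i) (hik : i ≤ k) {s : ℕ × ℕ}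
    (hs : IsLargestAt l i s) : IsLargestAt (SpanTree.node h1 h2 l r) i s := by
  obtain ⟨hmem, hep, hmax⟩ := hs
  refine ⟨Set.mem_insert_iff.mpr (Or.inr (Set.mem_union_left _ hmem)), hep, ?_⟩
  intro t ht hti
  simp only [SpanTree.spans, Set.mem_insert_iff, Set.mem_union] at ht
  rcases ht with h | h | h
  · subst h; rcases hti with h' | h' <;> simp_all <;> omega
  · exact hmax t h hti
  · have := spans_bounds r h
    rcases hti with h' | h' <;> omega

lemma lift_right {a k b : ℕ} (h1 : a ≤ k) (h2 : k < b)
    (l : SpanTree a k) (r : SpanTree (k + 1) b)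
    {i : ℕ} (hki : k < i) (hib : i < b) {s : ℕ × ℕ}
    (hs : IsLargestAt r i s) : IsLargestAt (SpanTree.node h1 h2 l r) i s := by
  obtain ⟨hmem, hep, hmax⟩ := hs
  refine ⟨Set.mem_insert_iff.mpr (Or.inr (Set.mem_union_right _ hmem)), hep, ?_⟩
  intro t ht hti
  simp only [SpanTree.spans, Set.mem_insert_iff, Set.mem_union] at ht
  rcases ht with h | h | h
  · subst h; rcases hti with h' | h' <;> simp_all <;> omega
  · have := spans_bounds l h
    rcases hti with h' | h' <;> omega
  · exact hmax t h hti

lemma exists_largest : ∀ {a b : ℕ} (T : SpanTree a b), a < b →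
    ∀ i, a ≤ i → i ≤ b → ∃ s, IsLargestAt T i s := by
  intro a b T
  induction T with
  | leaf j => omega
  | @node a k b h1 h2 l r ihl ihr =>
    intro _ i hai hib
    by_cases hie : i = a ∨ i = b
    · exact ⟨(a, b), root_largest _ (by omega) hie⟩
    push_neg at hie
    have hai' : a < i := by omega
    have hib' : i < b := by omega
    by_cases hik : i ≤ k
    · obtain ⟨s, hs⟩ := ihl (by omega) i hai hik
      exact ⟨s, lift_left h1 h2 l r hai' hik hs⟩
    · obtain ⟨s, hs⟩ := ihr (by omega) i (by omega) hib
      exact ⟨s, lift_right h1 h2 l r (by omega) hib' hs⟩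

lemma largest_unique {a b : ℕ} {T : SpanTree a b} {i : ℕ} {s t : ℕ × ℕ}
    (hs : IsLargestAt T i s) (ht : IsLargestAt T i t) : s = t := by
  have h1 := hs.2.2 t ht.1 ht.2.1
  have h2 := ht.2.2 s hs.1 hs.2.1
  obtain ⟨s1, s2⟩ := s; obtain ⟨t1, t2⟩ := t
  simp only [SpanSub] at h1 h2
  simp only [Prod.mk.injEq]; omega

lemma key : ∀ {a b : ℕ} (T₁ : SpanTree a b) (T₂ : SpanTree a b),
    (∀ i, a < i → i < b → ∀ s₁ s₂, IsLargestAt T₁ i s₁ → IsLargestAt T₂ i s₂ → s₁ = s₂) →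
    T₁.spans = T₂.spans := by
  intro a b T₁
  induction T₁ with
  | leaf j =>
    intro T₂ _
    cases T₂ with
    | leaf => rfl
    | node h1 h2 l r => omega
  | @node a k b h1 h2 l r ihl ihr =>
    intro T₂ h
    cases T₂ with
    | leaf => omega
    | @node _ k₂ _ h1' h2' l₂ r₂ =>
      -- first show k = k₂
      have hk : k = k₂ := by
        by_contra hne
        rcases Nat.lt_or_ge k k₂ with hlt | hge
        · -- largest at k₂ in T₂ is (a, k₂)
          have hak₂ : a < k₂ := by omega
          have hL₂ : IsLargestAt (SpanTree.node h1' h2' l₂ r₂) k₂ (a, k₂) :=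
            lift_left h1' h2' l₂ r₂ hak₂ le_rfl (root_largest l₂ hak₂ (Or.inr rfl))
          obtain ⟨s₁, hs₁⟩ := exists_largest (SpanTree.node h1 h2 l r) (by omega) k₂
            (by omega) (by omega)
          have heq := h k₂ hak₂ (by omega) s₁ (a, k₂) hs₁ hL₂
          have hmem := hs₁.1
          rw [heq] at hmem
          simp only [SpanTree.spans, Set.mem_insert_iff, Set.mem_union,
            Prod.mk.injEq] at hmem
          rcases hmem with ⟨_, h'⟩ | h' | h'
          · omega
          · have := spans_bounds l h'; simp at this; omega
          · have := spans_bounds r h'; simp at this; omega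
        · have hlt : k₂ < k := by omega
          have hak : a < k := by omega
          have hL₁ : IsLargestAt (SpanTree.node h1 h2 l r) k (a, k) :=
            lift_left h1 h2 l r hak le_rfl (root_largest l hak (Or.inr rfl))
          obtain ⟨s₂, hs₂⟩ := exists_largest (SpanTree.node h1' h2' l₂ r₂) (by omega) k
            (by omega) (by omega)
          have heq := h k hak (by omega) (a, k) s₂ hL₁ hs₂
          have hmem := hs₂.1
          rw [← heq] at hmem
          simp only [SpanTree.spans, Set.mem_insert_iff, Set.mem_union,
            Prod.mk.injEq] at hmem
          rcases hmem with ⟨_, h'⟩ | h' | h'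
          · omega
          · have := spans_bounds l₂ h'; simp at this; omega
          · have := spans_bounds r₂ h'; simp at this; omega
      subst hk
      have hL : l.spans = l₂.spans := by
        apply ihl l₂
        intro i hai hik s₁ s₂ hs₁ hs₂
        exact h i hai (by omega) s₁ s₂
          (lift_left h1 h2 l r hai hik.le hs₁)
          (lift_left h1' h2' l₂ r₂ hai hik.le hs₂)
      have hR : r.spans = r₂.spans := by
        apply ihr r₂
        intro i hki hib s₁ s₂ hs₁ hs₂
        exact h i (by omega) hib s₁ s₂
          (lift_right h1 h2 l r (by omega) hib hs₁)
          (lift_right h1' h2' l₂ r₂ (by omega) hib hs₂)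
      simp only [SpanTree.spans, hL, hR]

/-- The pointing representation determines the tree: if two binary span trees
over `[1, n]` have the same largest span with endpoint `i` for every
`i ∈ [1, n-1]`, then their span sets coincide. -/
theorem pointing_determines_tree (n : ℕ) (hn : 2 ≤ n)
    (T₁ T₂ : SpanTree 1 n) (M₁ M₂ : ℕ → ℕ × ℕ)
    (hM₁ : ∀ i ∈ Set.Icc 1 (n - 1), IsLargestAt T₁ i (M₁ i))
    (hM₂ : ∀ i ∈ Set.Icc 1 (n - 1), IsLargestAt T₂ i (M₂ i))
    (heq : ∀ i ∈ Set.Icc 1 (n - 1), M₁ i = M₂ i) :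
    T₁.spans = T₂.spans := by
  apply key
  intro i h1i hin s₁ s₂ hs₁ hs₂
  have hi : i ∈ Set.Icc 1 (n - 1) := by
    simp only [Set.mem_Icc]; omega
  have e₁ := largest_unique hs₁ (hM₁ i hi)
  have e₂ := largest_unique hs₂ (hM₂ i hi)
  rw [e₁, e₂, heq i hi]
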